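/- Let n ≥ 3 and let d_2, …, d_{n−1} be nonnegative integers such that 0 < 1 + (b+1)β + Σ_{i=2}^{n−1} d_i β^i ≤ β^n. Then |1 + (b+1)α + Σ_{i=2}^{n−1} d_i α^i| ≥ |α|^n. -/

import Mathlib

open scoped BigOperators

/-- The recurrent integer sequence `T` with `T 0 = 1`, `T 1 = a`, `T 2 = a² + b`,
`T (n+3) = a T(n+2) + b T(n+1) + T n`. -/
def Tseq (a b : ℤ) : ℕ → ℤ
  | 0 => 1
  | 1 => a
  | 2 => a ^ 2 + b
  | n + 3 => a * Tseq a b (n + 2) + b * Tseq a b (n + 1) + Tseq a b n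

/-- The comparison word `(a-1)(a+b-1)(a+b)(a+b)⋯`. -/
def ruleWord (a b : ℤ) : ℕ → ℤ
  | 0 => a - 1
  | 1 => a + b - 1
  | _ + 2 => a + b

/-- The word `d j, d (j-1), …, d (j-k)` is lexicographically ≤ the word
`ruleWord 0, …, ruleWord k`. -/
def WordLe (a b : ℤ) (d : ℕ → ℕ) (j k : ℕ) : Prop :=
  (∀ i ≤ k, (d (j - i) : ℤ) = ruleWord a b i) ∨
    ∃ m ≤ k, (∀ i < m, (d (j - i) : ℤ) = ruleWord a b i) ∧ (d (j - m) : ℤ) < ruleWord a b m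

/-- Every finite factor `d j ⋯ d (j-k)` is lexicographically ≤ `(a-1)(a+b-1)(a+b)⋯(a+b)`. -/
def AdmissibleWord (a b : ℤ) (d : ℕ → ℕ) : Prop :=
  ∀ j k : ℕ, k ≤ j → WordLe a b d j k

/-- An admissible finitely supported digit sequence. -/
def IsAdmissible (a b : ℤ) (d : ℕ → ℕ) : Prop :=
  (Function.support d).Finite ∧ AdmissibleWord a b d

/-- The Rauzy norm `𝒩(x₁,x₂) = |(α + b/β)x₁ + x₂/β|`. -/
noncomputable def rnorm (b : ℤ) (β : ℝ) (α : ℂ) (x : Fin 2 → ℝ) : ℝ :=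
  ‖(α + (b : ℂ) / (β : ℂ)) * (x 0 : ℂ) + (x 1 : ℂ) / (β : ℂ)‖

/-- `𝒩₀(w) = inf {𝒩(w - p) : p ∈ ℤ²}`. -/
noncomputable def rnorm0 (b : ℤ) (β : ℝ) (α : ℂ) (w : Fin 2 → ℝ) : ℝ :=
  sInf {r | ∃ g : Fin 2 → ℤ, r = rnorm b β α (w - fun i => (g i : ℝ))}

/-- `δ(N) = N(1/β, 1/β²) − (Σ_{j≥1} d_j T_{j-1}, Σ_{j≥2} d_j T_{j-2})`. -/
noncomputable def deltaVec (a b : ℤ) (β : ℝ) (N : ℕ) (d : ℕ → ℕ) : Fin 2 → ℝ :=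
  ![(N : ℝ) / β - ∑ᶠ j : ℕ, (d (j + 1) : ℝ) * (Tseq a b j : ℝ),
    (N : ℝ) / β ^ 2 - ∑ᶠ j : ℕ, (d (j + 2) : ℝ) * (Tseq a b j : ℝ)]

/-- The matrix `B`. -/
noncomputable def Bmat (b : ℤ) (β : ℝ) : Matrix (Fin 2) (Fin 2) ℝ :=
  !![-b / β, -1 / β; 1 - b / β ^ 2, -1 / β ^ 2]

/-- The Rauzy fractal `𝓡 = {Σ_{i≥2} d_i α^i}` over admissible digit sequences,
where the digit sequence `(d_i)_{i≥2}` is encoded as `i ↦ d (i+2)`. -/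
def RauzyFractal (a b : ℤ) (α : ℂ) : Set ℂ :=
  {z | ∃ d : ℕ → ℕ, AdmissibleWord a b d ∧ z = ∑' i : ℕ, (d i : ℂ) * α ^ (i + 2)}

open Polynomial ComplexConjugate

/-! Let `S = 1 + (b+1)X + ∑ dᵢ Xⁱ ∈ ℤ[X]` and `P = X³ - aX² - bX - 1`, whose roots are `β, α, ᾱ`.
The product `S(β) S(α) S(ᾱ) = S(β) |S(α)|²` is the resultant of `P` and `S`, hence an integer.
It is nonzero: the bounds on `a, b` rule out the only candidate rational roots `±1` of `P`, so `P`
is irreducible over `ℚ` and `S(α) = 0` would force `S(β) = 0`. Therefore `S(β) |S(α)|² ≥ 1`, and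
together with `0 < S(β) ≤ βⁿ` and `β |α|² = 1` this gives `|S(α)|² ≥ β⁻ⁿ = |α|²ⁿ`. -/

theorem Polynomial.aeval_eq_zero_of_irreducible {K L : Type*} [Field K] [CommRing L] [IsDomain L]
    [Algebra K L] {p q : K[X]} (hp : Irreducible p) {x y : L} (hx : aeval x p = 0)
    (hy : aeval y p = 0) (hq : aeval x q = 0) : aeval y q = 0 := by
  have hint : IsIntegral K x := IsAlgebraic.isIntegral ⟨p, hp.ne_zero, hx⟩
  have hpq : p ∣ q :=
    ((minpoly.irreducible hint).dvd_symm hp (minpoly.dvd K x hx)).trans (minpoly.dvd K x hq)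
  exact aeval_eq_zero_of_dvd_aeval_eq_zero hpq hy

theorem Polynomial.exists_int_eq_prod_aroots_aeval {K : Type*} [Field K] {p : ℤ[X]} (hp : p.Monic)
    (hsplit : (p.map (algebraMap ℤ K)).Splits) (s : ℤ[X]) :
    ∃ N : ℤ, ((p.aroots K).map fun r ↦ aeval r s).prod = N := by
  refine ⟨resultant p s p.natDegree s.natDegree, ?_⟩
  have h := resultant_eq_prod_eval (p.map (algebraMap ℤ K)) (s.map (algebraMap ℤ K)) s.natDegree
    natDegree_map_le hsplit
  rw [resultant_map_map, (hp.map _).leadingCoeff, one_pow, one_mul, hp.natDegree_map] at h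
  rw [aroots_def, ← eq_intCast (algebraMap ℤ K), h]
  simp_rw [eval_map_algebraMap]

@[simp]
theorem Polynomial.aeval_int_ofReal (s : ℤ[X]) (x : ℝ) : aeval (x : ℂ) s = aeval x s := by
  rw [← Complex.coe_algebraMap, aeval_algebraMap_apply]

@[simp]
theorem Polynomial.aeval_int_conj (s : ℤ[X]) (z : ℂ) : aeval (conj z) s = conj (aeval z s) := by
  rw [← RingHom.toIntAlgHom_apply, aeval_algHom_apply, RingHom.toIntAlgHom_apply]

theorem norm_pow_le_norm_of_one_le_mul_normSq {β x : ℝ} {α z : ℂ} {n : ℕ}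
    (hβα : β * Complex.normSq α = 1) (hxβ : x ≤ β ^ n) (hxz : 1 ≤ x * Complex.normSq z) :
    ‖α‖ ^ n ≤ ‖z‖ := by
  have hsq : Complex.normSq α ^ n * β ^ n = 1 := by rw [← mul_pow, mul_comm, hβα, one_pow]
  have hα0 : 0 ≤ Complex.normSq α ^ n := pow_nonneg (Complex.normSq_nonneg α) n
  rw [← pow_le_pow_iff_left₀ (by positivity) (norm_nonneg z) two_ne_zero, ← pow_mul, mul_comm,
    pow_mul, Complex.sq_norm, Complex.sq_norm]
  calc Complex.normSq α ^ n ≤ Complex.normSq α ^ n * (x * Complex.normSq z) :=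
        le_mul_of_one_le_right hα0 hxz
    _ ≤ Complex.normSq α ^ n * (β ^ n * Complex.normSq z) :=
        mul_le_mul_of_nonneg_left (mul_le_mul_of_nonneg_right hxβ (Complex.normSq_nonneg z)) hα0
    _ = Complex.normSq z := by rw [← mul_assoc, hsq, one_mul]

noncomputable def cubicPoly (a b : ℤ) : ℤ[X] := X ^ 3 - C a * X ^ 2 - C b * X - 1

section cubicPoly

variable (a b : ℤ)

theorem monic_cubicPoly : (cubicPoly a b).Monic := by
  unfold cubicPoly; monicity!

theorem natDegree_cubicPoly : (cubicPoly a b).natDegree = 3 := by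
  unfold cubicPoly; compute_degree!

theorem coeff_zero_cubicPoly : (cubicPoly a b).coeff 0 = -1 := by
  simp [cubicPoly]

variable {a b}

@[simp]
theorem aeval_cubicPoly {A : Type*} [CommRing A] (x : A) :
    aeval x (cubicPoly a b) = x ^ 3 - a * x ^ 2 - b * x - 1 := by
  simp [cubicPoly]

theorem irreducible_map_cubicPoly (h1 : a + b ≠ 0) (h2 : b ≠ a + 2) :
    Irreducible ((cubicPoly a b).map (algebraMap ℤ ℚ)) := by
  refine irreducible_of_degree_le_three_of_not_isRoot
    (by simp [(monic_cubicPoly a b).natDegree_map, natDegree_cubicPoly]) fun r hr ↦ ?_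
  rw [IsRoot, eval_map_algebraMap] at hr
  obtain ⟨z, rfl, -⟩ := exists_integer_of_is_root_of_monic (monic_cubicPoly a b) hr
  rw [aeval_algebraMap_apply, aeval_cubicPoly,
    map_eq_zero_iff _ (algebraMap ℤ ℚ).injective_int] at hr
  rcases Int.eq_one_or_neg_one_of_mul_eq_one (v := z ^ 2 - a * z - b) (by linear_combination hr)
    with rfl | rfl
  · exact h1 (by linear_combination -hr)
  · exact h2 (by linear_combination hr)

variable {β : ℝ} {α : ℂ}

theorem aroots_cubicPoly_eq (hβ : aeval β (cubicPoly a b) = 0) (hα : aeval α (cubicPoly a b) = 0)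
    (hαim : α.im ≠ 0) : (cubicPoly a b).aroots ℂ = {(β : ℂ), α, conj α} := by
  have hβα : (β : ℂ) ≠ α := fun h ↦ hαim (by simp [← h])
  have hβα' : (β : ℂ) ≠ conj α := fun h ↦ hαim (by simpa using congrArg Complex.im h.symm)
  have hαα' : α ≠ conj α := fun h ↦ hαim (by linarith [congrArg Complex.im h, Complex.conj_im α])
  have hS : ({(β : ℂ), α, conj α} : Finset ℂ).val = {(β : ℂ), α, conj α} := by
    simp [hβα, hβα', hαα']
  rw [aroots_def, ← hS]
  refine roots_eq_of_natDegree_le_card_of_ne_zero ?_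
    (by simp [(monic_cubicPoly a b).natDegree_map, natDegree_cubicPoly, hβα, hβα', hαα'])
    ((monic_cubicPoly a b).map _).ne_zero
  simp only [Finset.mem_insert, Finset.mem_singleton, eval_map_algebraMap]
  rintro x (rfl | rfl | rfl) <;>
    simp only [aeval_int_ofReal, aeval_int_conj, hβ, hα, Complex.ofReal_zero, map_zero]

theorem splits_map_cubicPoly (hroots : (cubicPoly a b).aroots ℂ = {(β : ℂ), α, conj α}) :
    ((cubicPoly a b).map (algebraMap ℤ ℂ)).Splits := by
  rw [splits_iff_card_roots, ← aroots_def, hroots, (monic_cubicPoly a b).natDegree_map,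
    natDegree_cubicPoly]
  rfl

theorem mul_normSq_eq_one (hroots : (cubicPoly a b).aroots ℂ = {(β : ℂ), α, conj α}) :
    β * Complex.normSq α = 1 := by
  have h := (splits_map_cubicPoly hroots).coeff_zero_eq_prod_roots_of_monic
    ((monic_cubicPoly a b).map _)
  rw [← aroots_def, hroots, (monic_cubicPoly a b).natDegree_map, natDegree_cubicPoly, coeff_map,
    coeff_zero_cubicPoly] at h
  have h' : (β : ℂ) * (α * conj α) = 1 := by
    simp only [Multiset.insert_eq_cons, Multiset.prod_cons, Multiset.prod_singleton, map_neg,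
      map_one] at h
    linear_combination h
  rw [Complex.mul_conj] at h'
  exact_mod_cast h'

theorem exists_int_eq_mul_normSq_aeval
    (hroots : (cubicPoly a b).aroots ℂ = {(β : ℂ), α, conj α}) (s : ℤ[X]) :
    ∃ N : ℤ, aeval β s * Complex.normSq (aeval α s) = N := by
  obtain ⟨N, hN⟩ := exists_int_eq_prod_aroots_aeval (monic_cubicPoly a b)
    (splits_map_cubicPoly hroots) s
  refine ⟨N, ?_⟩
  rw [hroots] at hN
  simp only [Multiset.insert_eq_cons, Multiset.map_cons, Multiset.map_singleton,
    Multiset.prod_cons, Multiset.prod_singleton, aeval_int_ofReal, aeval_int_conj,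
    Complex.mul_conj] at hN
  exact_mod_cast hN

theorem one_le_mul_normSq_aeval (hirr : Irreducible ((cubicPoly a b).map (algebraMap ℤ ℚ)))
    (hβ : aeval β (cubicPoly a b) = 0) (hα : aeval α (cubicPoly a b) = 0) (hαim : α.im ≠ 0)
    {s : ℤ[X]} (hpos : 0 < aeval β s) : 1 ≤ aeval β s * Complex.normSq (aeval α s) := by
  have hαs : aeval α s ≠ 0 := by
    intro h
    have h' := aeval_eq_zero_of_irreducible hirr (x := α) (y := (β : ℂ))
      (q := s.map (algebraMap ℤ ℚ)) (by rwa [aeval_map_algebraMap])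
      (by rwa [aeval_map_algebraMap, aeval_int_ofReal, Complex.ofReal_eq_zero])
      (by rwa [aeval_map_algebraMap])
    rw [aeval_map_algebraMap, aeval_int_ofReal, Complex.ofReal_eq_zero] at h'
    exact hpos.ne' h'
  obtain ⟨N, hN⟩ := exists_int_eq_mul_normSq_aeval (aroots_cubicPoly_eq hβ hα hαim) s
  have hNpos : (0 : ℝ) < N := hN ▸ mul_pos hpos (Complex.normSq_pos.mpr hαs)
  rw [hN]
  exact_mod_cast (Int.cast_pos.mp hNpos : 0 < N)

end cubicPoly

theorem abs_one_add_sum_alpha_ge_general (a b : ℤ) (hab : -a + 1 ≤ b) (hb : b ≤ -2)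
    (β : ℝ) (hβroot : β ^ 3 = a * β ^ 2 + b * β + 1)
    (α : ℂ) (hαim : α.im ≠ 0) (hαroot : α ^ 3 = a * α ^ 2 + b * α + 1)
    (n : ℕ) (d : ℕ → ℕ)
    (hpos : 0 < 1 + ((b : ℝ) + 1) * β + ∑ i ∈ Finset.Ico 2 n, (d i : ℝ) * β ^ i)
    (hle : 1 + ((b : ℝ) + 1) * β + ∑ i ∈ Finset.Ico 2 n, (d i : ℝ) * β ^ i ≤ β ^ n) :
    ‖α‖ ^ n ≤
      ‖1 + ((b : ℂ) + 1) * α + ∑ i ∈ Finset.Ico 2 n, (d i : ℂ) * α ^ i‖ := by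
  set s : ℤ[X] := 1 + C (b + 1) * X + ∑ i ∈ Finset.Ico 2 n, C (d i : ℤ) * X ^ i
  have hs {A : Type} [CommRing A] (x : A) :
      aeval x s = 1 + ((b : A) + 1) * x + ∑ i ∈ Finset.Ico 2 n, (d i : A) * x ^ i := by
    simp [s]
  rw [← hs] at hpos hle ⊢
  have hβ : aeval β (cubicPoly a b) = 0 := by rw [aeval_cubicPoly]; linear_combination hβroot
  have hα : aeval α (cubicPoly a b) = 0 := by rw [aeval_cubicPoly]; linear_combination hαroot
  have hirr := irreducible_map_cubicPoly (a := a) (b := b) (by omega) (by omega)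
  exact norm_pow_le_norm_of_one_le_mul_normSq (mul_normSq_eq_one (aroots_cubicPoly_eq hβ hα hαim))
    hle (one_le_mul_normSq_aeval hirr hβ hα hαim hpos)

/-- If `0 < 1 + (b+1)β + Σ_{i=2}^{n−1} d_i β^i ≤ β^n` then
`|1 + (b+1)α + Σ_{i=2}^{n−1} d_i α^i| ≥ |α|^n`. -/
theorem abs_one_add_sum_alpha_ge (a b : ℤ) (hab : -a + 1 ≤ b) (hb : b ≤ -2)
    (β : ℝ) (hβ : 1 < β) (hβroot : β ^ 3 = a * β ^ 2 + b * β + 1)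
    (α : ℂ) (hαim : α.im ≠ 0) (hαroot : α ^ 3 = a * α ^ 2 + b * α + 1)
    (hαabs : ‖α‖ < 1)
    (n : ℕ) (hn : 3 ≤ n) (d : ℕ → ℕ)
    (hpos : 0 < 1 + ((b : ℝ) + 1) * β + ∑ i ∈ Finset.Ico 2 n, (d i : ℝ) * β ^ i)
    (hle : 1 + ((b : ℝ) + 1) * β + ∑ i ∈ Finset.Ico 2 n, (d i : ℝ) * β ^ i ≤ β ^ n) :
    ‖α‖ ^ n ≤
      ‖1 + ((b : ℂ) + 1) * α + ∑ i ∈ Finset.Ico 2 n, (d i : ℂ) * α ^ i‖ :=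
  abs_one_add_sum_alpha_ge_general a b hab hb β hβroot α hαim hαroot n d hpos hle
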